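/- arXiv:1801.03388 — 9 statements merged into one kernel-verified Lean document; each statement's English description precedes it below -/
import Mathlib

section
/- The two-point rule on [0,1] with nodes x₁ = 1/2 − (√2 + √7)/10, x₂ = 1/2 + (√7 − √2)/10 and weights w₁ = 1/2 − √14/84, w₂ = 1/2 + √14/84 integrates exactly every polynomial p of degree at most 4 with p(0) = p(1) = 0: ∫₀¹ p(x) dx = w₁·p(x₁) + w₂·p(x₂). -/
/-- The C⁰ degree-4 two-point rule is exact for quartics vanishing at 0 and 1. -/
theorem c0_degree4_rule :
    ∀ p : Polynomial ℝ, p.natDegree ≤ 4 → p.eval 0 = 0 → p.eval 1 = 0 →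
      ∫ x in (0:ℝ)..1, p.eval x =
        (1 / 2 - Real.sqrt 14 / 84) *
            p.eval (1 / 2 - (Real.sqrt 2 + Real.sqrt 7) / 10) +
          (1 / 2 + Real.sqrt 14 / 84) *
            p.eval (1 / 2 + (Real.sqrt 7 - Real.sqrt 2) / 10) := by
  intro p hdeg h0 h1
  have heval : ∀ x : ℝ, p.eval x = ∑ i ∈ Finset.range 5, p.coeff i * x ^ i := fun x =>
    Polynomial.eval_eq_sum_range' (lt_of_le_of_lt hdeg (by norm_num)) x
  have hint : ∫ x in (0:ℝ)..1, p.eval x =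
      ∑ i ∈ Finset.range 5, p.coeff i * (1 / (i + 1 : ℝ)) := by
    simp only [heval]
    rw [intervalIntegral.integral_finset_sum]
    · refine Finset.sum_congr rfl fun i _ => ?_
      rw [intervalIntegral.integral_const_mul, integral_pow]
      norm_num
    · exact fun i _ => (continuous_const.mul (continuous_pow i)).intervalIntegrable _ _
  rw [hint, heval, heval]
  rw [heval] at h0 h1
  set a0 := p.coeff 0
  set a1 := p.coeff 1
  set a2 := p.coeff 2
  set a3 := p.coeff 3
  set a4 := p.coeff 4
  simp only [Finset.sum_range_succ, Finset.sum_range_zero] at h0 h1 ⊢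
  norm_num at h0 h1 ⊢
  have h14 : Real.sqrt 14 = Real.sqrt 2 * Real.sqrt 7 := by
    rw [← Real.sqrt_mul (by norm_num : (2:ℝ) ≥ 0)]; norm_num
  rw [h14]
  set s := Real.sqrt 2
  set t := Real.sqrt 7
  have hs : s ^ 2 = 2 := Real.sq_sqrt (by norm_num)
  have ht : t ^ 2 = 7 := Real.sq_sqrt (by norm_num)
  linear_combination ((1/5000)*a3 + (13/2500)*a2 + (19/1250)*a1 + (61/105000)*t^2*a3 +
      (3/8750)*t^2*a2 + (-1/7500)*t^2*a1 + (-1/105000)*t^4*a3 + (-1/105000)*t^4*a2 +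
      (-1/105000)*t^4*a1 + (-1/1000)*s*a3 + (-1/500)*s*a2 + (-1/500)*s*a1 +
      (1/14000)*s*t^2*a3 + (1/7000)*s*t^2*a2 + (1/7000)*s*t^2*a1 + (1/10000)*s^2*a3 +
      (1/10000)*s^2*a2 + (1/10000)*s^2*a1 + (-1/105000)*s^2*t^2*a3 + (-1/105000)*s^2*t^2*a2 +
      (-1/105000)*s^2*t^2*a1)*hs +
    ((121/70000)*a3 + (1313/210000)*a2 + (153/10000)*a1 + (17/210000)*t^2*a3 +
      (17/210000)*t^2*a2 + (17/210000)*t^2*a1 + (-23/7000)*s*a3 + (-23/3500)*s*a2 +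
      (-23/3500)*s*a1 + (1/42000)*s*t^2*a3 + (1/21000)*s*t^2*a2 + (1/21000)*s*t^2*a1)*ht +
    ((-11/80) + (3/200)*t^2 + (1/10000)*t^4 + (-1/20)*s + (-101/21000)*s*t^2 +
      (1/21000)*s*t^4 + (3/200)*s^2 + (-1/8750)*s^2*t^2 + (-1/105000)*s^2*t^4 + (-1/500)*s^3 +
      (1/7000)*s^3*t^2 + (1/10000)*s^4 + (-1/105000)*s^4*t^2)*h0 +
    ((11/80) + (-3/200)*t^2 + (-1/10000)*t^4 + (1/20)*s + (101/21000)*s*t^2 +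
      (-1/21000)*s*t^4 + (-3/200)*s^2 + (1/8750)*s^2*t^2 + (1/105000)*s^2*t^4 + (1/500)*s^3 +
      (-1/7000)*s^3*t^2 + (-1/10000)*s^4 + (1/105000)*s^4*t^2)*h1
end

section
/- The symmetric two-point rule with nodes x± = 1/2 ± (1/30)·√(225 − 30√30) and equal weights 1/2 integrates exactly every polynomial p of degree at most 5 satisfying p(0) = p(1) = p'(0) = p'(1) = 0: ∫₀¹ p(x) dx = (1/2)·p(x₋) + (1/2)·p(x₊). -/
/-- The second C¹ quintic rule C1xD5x2: symmetric two-point rule with equal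
weights 1/2, exact on quintics vanishing to order 2 at 0 and 1. -/
theorem c1_degree5_rule2 :
    ∀ p : Polynomial ℝ, p.natDegree ≤ 5 →
      p.eval 0 = 0 → p.eval 1 = 0 →
      p.derivative.eval 0 = 0 → p.derivative.eval 1 = 0 →
      ∫ x in (0:ℝ)..1, p.eval x =
        (1/2) * p.eval (1/2 - (1/30) * Real.sqrt (225 - 30 * Real.sqrt 30)) +
        (1/2) * p.eval (1/2 + (1/30) * Real.sqrt (225 - 30 * Real.sqrt 30)) := by
  intro p hdeg h0 h1 hd0 hd1
  have hd6 : p.natDegree < 6 := lt_of_le_of_lt hdeg (by norm_num)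
  have heval : ∀ x : ℝ, p.eval x = ∑ i ∈ Finset.range 6, p.coeff i * x ^ i := by
    intro x; exact p.eval_eq_sum_range' hd6 x
  have hd6' : p.derivative.natDegree < 6 :=
    lt_of_le_of_lt (Polynomial.natDegree_derivative_le p) (by omega)
  have hevald : ∀ x : ℝ, p.derivative.eval x =
      ∑ i ∈ Finset.range 6, p.coeff (i + 1) * (i + 1) * x ^ i := by
    intro x
    rw [p.derivative.eval_eq_sum_range' hd6' x]
    refine Finset.sum_congr rfl fun i _ => ?_
    rw [Polynomial.coeff_derivative]
  have hc6 : p.coeff 6 = 0 := Polynomial.coeff_eq_zero_of_natDegree_lt (by omega)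
  -- the integral
  have hint : ∫ x in (0:ℝ)..1, p.eval x =
      ∑ i ∈ Finset.range 6, p.coeff i / (i + 1) := by
    rw [intervalIntegral.integral_congr (g := fun x => ∑ i ∈ Finset.range 6, p.coeff i * x ^ i)
      (fun x _ => heval x)]
    rw [intervalIntegral.integral_finset_sum]
    · refine Finset.sum_congr rfl fun i _ => ?_
      rw [intervalIntegral.integral_const_mul, integral_pow]
      norm_num [div_eq_mul_inv]
    · intro i _
      exact ((continuous_const.mul (continuous_pow i)).intervalIntegrable 0 1)
  -- abbreviations
  set s : ℝ := Real.sqrt 30 with hs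
  set t : ℝ := Real.sqrt (225 - 30 * s) with ht
  have hs2 : s ^ 2 = 30 := Real.sq_sqrt (by norm_num)
  have hs6 : s ≤ 6 := by
    rw [hs]
    nlinarith [Real.sq_sqrt (show (30:ℝ) ≥ 0 by norm_num), Real.sqrt_nonneg (30:ℝ)]
  have ht2 : t ^ 2 = 225 - 30 * s := Real.sq_sqrt (by nlinarith)
  -- evaluate the hypotheses
  rw [heval] at h0 h1
  rw [hevald] at hd0 hd1
  simp [Finset.sum_range_succ] at h0 h1 hd0 hd1
  -- coefficients
  have ha2 : p.coeff 2 = p.coeff 4 + 2 * p.coeff 5 := by linarith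
  have ha3 : p.coeff 3 = -2 * p.coeff 4 - 3 * p.coeff 5 := by linarith
  rw [hint, heval, heval]
  simp only [Finset.sum_range_succ, Finset.sum_range_zero]
  rw [h0, hd0, ha2, ha3]
  push_cast
  linear_combination (-(p.coeff 4 + 5/2 * p.coeff 5)) *
    (((t ^ 2 / 900 - 1/4 - s/30) / 900) * ht2 + hs2 / 900)
end

section
/- For every n ≥ 1 and δ = √((n+2)/n), the polynomial Rₙ(x) = Cₙ^{(3/2)}(x) + δ·C_{n−1}^{(3/2)}(x) has n simple real roots, all contained in the open interval (−1, 1). -/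
/-- Gegenbauer polynomials `C_n^{(α)}` defined by the standard three-term
recurrence: `C_0 = 1`, `C_1 = 2αx`,
`(n+2) C_{n+2} = 2(n+1+α) x C_{n+1} − (n+2α) C_n`. -/
noncomputable def gegenbauer (α : ℝ) : ℕ → Polynomial ℝ
  | 0 => 1
  | 1 => Polynomial.C (2 * α) * Polynomial.X
  | (n + 2) =>
      Polynomial.C (2 * ((n : ℝ) + 1 + α) / ((n : ℝ) + 2)) * Polynomial.X *
          gegenbauer α (n + 1) -
        Polynomial.C (((n : ℝ) + 2 * α) / ((n : ℝ) + 2)) * gegenbauer α n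

open Polynomial

noncomputable def P (k : ℕ) : Polynomial ℝ := gegenbauer (3/2) k

lemma P_rec (k : ℕ) : P (k+2) =
    Polynomial.C ((2*(k:ℝ)+5) / ((k:ℝ)+2)) * Polynomial.X * P (k+1)
      - Polynomial.C (((k:ℝ)+3) / ((k:ℝ)+2)) * P k := by
  show gegenbauer (3/2) (k+2) = _
  rw [gegenbauer]
  show _ = C _ * X * gegenbauer (3/2) (k+1) - C _ * gegenbauer (3/2) k
  rw [show (2*((k:ℝ)+1+3/2)) = 2*(k:ℝ)+5 by ring,
      show ((k:ℝ)+2*(3/2)) = (k:ℝ)+3 by ring]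

lemma P_eval_one : ∀ k : ℕ, eval 1 (P k) = ((k:ℝ)+1)*((k:ℝ)+2)/2
  | 0 => by simp [P, gegenbauer]
  | 1 => by simp [P, gegenbauer]; norm_num
  | (k+2) => by
      have h1 := P_eval_one (k+1)
      have h0 := P_eval_one k
      have hk2 : ((k:ℝ)+2) ≠ 0 := by positivity
      rw [P_rec]
      simp only [eval_sub, eval_mul, eval_C, eval_X, h1, h0]
      push_cast
      field_simp
      ring

lemma P_eval_negone : ∀ k : ℕ, eval (-1) (P k) = (-1)^k * (((k:ℝ)+1)*((k:ℝ)+2)/2)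
  | 0 => by simp [P, gegenbauer]
  | 1 => by simp [P, gegenbauer]; norm_num
  | (k+2) => by
      have h1 := P_eval_negone (k+1)
      have h0 := P_eval_negone k
      have hk2 : ((k:ℝ)+2) ≠ 0 := by positivity
      rw [P_rec]
      simp only [eval_sub, eval_mul, eval_C, eval_X, h1, h0]
      push_cast
      field_simp
      ring

lemma P_one_lead : (P 1) = C 3 * X := by
  show C (2*(3/2:ℝ)) * X = _
  norm_num

lemma P_deg_lead : ∀ k : ℕ, (P k).natDegree = k ∧ 0 < (P k).leadingCoeff
  | 0 => by constructor <;> simp [P, gegenbauer]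
  | 1 => by
      rw [P_one_lead]
      constructor
      · exact natDegree_C_mul_X 3 (by norm_num)
      · rw [leadingCoeff_mul, leadingCoeff_C, leadingCoeff_X, mul_one]; norm_num
  | (k+2) => by
      obtain ⟨hd1, hl1⟩ := P_deg_lead (k+1)
      obtain ⟨hd0, hl0⟩ := P_deg_lead k
      have ha : ((2*(k:ℝ)+5) / ((k:ℝ)+2)) ≠ 0 := by positivity
      have hp1 : P (k+1) ≠ 0 := fun h => by simp [h] at hl1
      have hdq : (C ((2*(k:ℝ)+5)/((k:ℝ)+2)) * X * P (k+1)).natDegree = k + 2 := by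
        rw [natDegree_mul (by simp [ha] : C ((2*(k:ℝ)+5)/((k:ℝ)+2)) * X ≠ 0) hp1,
          natDegree_C_mul_X _ ha, hd1]
        omega
      have hdr : (C (((k:ℝ)+3)/((k:ℝ)+2)) * P k).natDegree < k + 2 :=
        lt_of_le_of_lt (le_trans (natDegree_C_mul_le _ _) (le_of_eq hd0)) (by omega)
      have hq0 : (C ((2*(k:ℝ)+5)/((k:ℝ)+2)) * X * P (k+1)) ≠ 0 := by
        intro h; rw [h] at hdq; simp at hdq
      have hdeglt : (C (((k:ℝ)+3)/((k:ℝ)+2)) * P k).degree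
          < (C ((2*(k:ℝ)+5)/((k:ℝ)+2)) * X * P (k+1)).degree := by
        apply lt_of_le_of_lt (degree_le_natDegree)
        rw [degree_eq_natDegree hq0, hdq]
        exact_mod_cast lt_of_lt_of_le (Nat.cast_lt.2 hdr) (le_refl _)
      constructor
      · rw [P_rec, natDegree_sub_eq_left_of_natDegree_lt (by omega), hdq]
      · rw [P_rec, leadingCoeff_sub_of_degree_lt hdeglt,
          leadingCoeff_mul, leadingCoeff_mul, leadingCoeff_C, leadingCoeff_X, mul_one]
        positivity

lemma exists_root_Ioo (q : Polynomial ℝ) {a b : ℝ} (hab : a < b)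
    (h : eval a q * eval b q < 0) : ∃ c ∈ Set.Ioo a b, eval c q = 0 := by
  have hc : ContinuousOn (fun x => eval x q) (Set.Icc a b) :=
    (q.continuous_aeval.continuousOn)
  rcases lt_or_gt_of_ne (fun h0 : eval a q = 0 => by simp [h0] at h) with hneg | hpos
  · have hb : 0 < eval b q := by nlinarith
    have := intermediate_value_Ioo (le_of_lt hab) hc
      (show (0:ℝ) ∈ Set.Ioo (eval a q) (eval b q) from ⟨hneg, hb⟩)
    obtain ⟨c, hc1, hc2⟩ := this
    exact ⟨c, hc1, hc2⟩
  · have hb : eval b q < 0 := by nlinarith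
    have := intermediate_value_Ioo' (le_of_lt hab) hc
      (show (0:ℝ) ∈ Set.Ioo (eval b q) (eval a q) from ⟨hb, hpos⟩)
    obtain ⟨c, hc1, hc2⟩ := this
    exact ⟨c, hc1, hc2⟩

lemma chain (k : ℕ) (x : ℕ → ℝ) (q : Polynomial ℝ)
    (hmono : ∀ i j, i < j → j < k → x i < x j)
    (hIoo : ∀ i, i < k → -1 < x i ∧ x i < 1)
    (hsgn : ∀ i, i < k → 0 < (-1:ℝ)^(k-i) * eval (x i) q)
    (hm1 : 0 < (-1:ℝ)^(k+1) * eval (-1) q) (h1 : 0 < eval 1 q) :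
    ∃ y : ℕ → ℝ, ∀ j, j ≤ k →
      ((if j = 0 then (-1:ℝ) else x (j-1)) < y j ∧
       y j < (if j = k then (1:ℝ) else x j) ∧ eval (y j) q = 0) := by
  have key : ∀ j, j ≤ k → ∃ c ∈ Set.Ioo (if j = 0 then (-1:ℝ) else x (j-1))
      (if j = k then (1:ℝ) else x j), eval c q = 0 := by
    intro j hj
    set L : ℝ := if j = 0 then (-1:ℝ) else x (j-1) with hL
    set R : ℝ := if j = k then (1:ℝ) else x j with hR
    have hLR : L < R := by
      rcases eq_or_ne j 0 with h0 | h0 <;> rcases eq_or_ne j k with hk | hk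
      · have hk0 : k = 0 := by omega
        simp only [hL, hR, if_pos h0, if_pos hk]; norm_num
      · simp only [hL, hR, if_pos h0, if_neg hk]
        exact (hIoo j (lt_of_le_of_ne hj hk)).1
      · simp only [hL, hR, if_neg h0, if_pos hk]
        exact (hIoo (j-1) (by omega)).2
      · simp only [hL, hR, if_neg h0, if_neg hk]
        exact hmono (j-1) j (by omega) (by omega)
    have hLs : 0 < (-1:ℝ)^(k+1-j) * eval L q := by
      rcases eq_or_ne j 0 with h0 | h0
      · simpa [hL, h0] using hm1
      · have := hsgn (j-1) (by omega)
        have he : k - (j-1) = k+1-j := by omega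
        rw [he] at this
        simpa [hL, h0] using this
    have hRs : 0 < (-1:ℝ)^(k-j) * eval R q := by
      rcases eq_or_ne j k with hk | hk
      · simp only [hR, if_pos hk]
        simpa [hk] using h1
      · simpa [hR, hk] using hsgn j (lt_of_le_of_ne hj hk)
    apply exists_root_Ioo q hLR
    have he : k + 1 - j = (k - j) + 1 := by omega
    rw [he, pow_succ] at hLs
    set t : ℝ := (-1:ℝ)^(k-j) with ht
    have ht2 : t * t = 1 := by
      rw [ht, ← pow_add]
      simp [← two_mul, pow_mul]
    nlinarith [hLs, hRs, ht2]
  choose! y hy1 hy2 using key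
  exact ⟨y, fun j hj => ⟨(hy1 j hj).1, (hy1 j hj).2, hy2 j hj⟩⟩

lemma neg_one_sq_pow (e : ℕ) : (-1:ℝ)^e * (-1:ℝ)^e = 1 := by
  rw [← pow_add, ← two_mul, pow_mul]
  norm_num

lemma prod_sign (k j : ℕ) (x : ℕ → ℝ) (y : ℝ) (hj : j ≤ k)
    (hlt : ∀ i, i < j → x i < y) (hgt : ∀ i, j ≤ i → i < k → y < x i) :
    0 < (-1:ℝ)^(k-j) * ∏ i ∈ Finset.range k, (y - x i) := by
  rw [← Finset.prod_range_mul_prod_Ico _ hj]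
  have hA : 0 < ∏ i ∈ Finset.range j, (y - x i) :=
    Finset.prod_pos (fun i hi => sub_pos.2 (hlt i (Finset.mem_range.1 hi)))
  have hB : ∏ i ∈ Finset.Ico j k, (y - x i)
      = (-1:ℝ)^(k-j) * ∏ i ∈ Finset.Ico j k, (x i - y) := by
    rw [← Nat.card_Ico j k, ← Finset.prod_const (-1:ℝ), ← Finset.prod_mul_distrib]
    exact Finset.prod_congr rfl (fun i _ => by ring)
  have hC : 0 < ∏ i ∈ Finset.Ico j k, (x i - y) :=
    Finset.prod_pos (fun i hi => by
      have := Finset.mem_Ico.1 hi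
      exact sub_pos.2 (hgt i this.1 this.2))
  rw [hB]
  have h1 : (-1:ℝ)^(k-j) * ((∏ i ∈ Finset.range j, (y - x i)) *
      ((-1:ℝ)^(k-j) * ∏ i ∈ Finset.Ico j k, (x i - y)))
      = (∏ i ∈ Finset.range j, (y - x i)) * ∏ i ∈ Finset.Ico j k, (x i - y) := by
    rw [show ∀ t A B : ℝ, t*(A*(t*B)) = (t*t)*(A*B) from fun t A B => by ring,
      neg_one_sq_pow, one_mul]
  rw [h1]
  exact mul_pos hA hC

lemma P_eq_prod (k : ℕ) (x : ℕ → ℝ)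
    (hmono : ∀ i j, i < j → j < k → x i < x j)
    (hroot : ∀ i, i < k → eval (x i) (P k) = 0) (y : ℝ) :
    eval y (P k) = (P k).leadingCoeff * ∏ i ∈ Finset.range k, (y - x i) := by
  obtain ⟨hd, hl⟩ := P_deg_lead k
  have hP0 : P k ≠ 0 := fun h => by simp [h] at hl
  have hinj : ∀ i ∈ Finset.range k, ∀ i' ∈ Finset.range k, x i = x i' → i = i' := by
    intro i hi i' hi' hxx
    by_contra hne
    rcases Nat.lt_or_ge i i' with h | h
    · exact absurd hxx (ne_of_lt (hmono i i' h (Finset.mem_range.1 hi')))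
    · exact absurd hxx.symm (ne_of_lt (hmono i' i (by omega) (Finset.mem_range.1 hi)))
  set M : Multiset ℝ := (Finset.range k).val.map x with hM
  have hnodup : M.Nodup := Multiset.Nodup.map_on hinj (Finset.range k).nodup
  have hle : M ≤ (P k).roots := by
    rw [Multiset.le_iff_subset hnodup]
    intro a ha
    obtain ⟨i, hi, rfl⟩ := Multiset.mem_map.1 ha
    exact (mem_roots hP0).2 (hroot i (by simpa using hi))
  have hcard : Multiset.card M = k := by simp [hM]
  have hroots : (P k).roots = M := by
    refine (Multiset.eq_of_le_of_card_le hle ?_).symm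
    rw [hcard]
    exact le_trans (P k).card_roots' (le_of_eq hd)
  have hfact := C_leadingCoeff_mul_prod_multiset_X_sub_C
    (p := P k) (by rw [hroots, hcard, hd])
  conv_lhs => rw [← hfact]
  rw [eval_mul, eval_C, hroots, hM]
  congr 1
  rw [Multiset.map_map, eval_multiset_prod, Multiset.map_map]
  rw [Finset.prod_eq_multiset_prod]
  congr 1
  apply Multiset.map_congr rfl
  intro i _
  simp

lemma key : ∀ k : ℕ, ∃ x : ℕ → ℝ,
    (∀ i j, i < j → j < k → x i < x j) ∧
    (∀ i, i < k → -1 < x i ∧ x i < 1) ∧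
    (∀ i, i < k → eval (x i) (P k) = 0) ∧
    (∀ i, i < k → 0 < (-1:ℝ)^(k-i) * eval (x i) (P (k+1))) := by
  intro k
  induction k with
  | zero => exact ⟨fun _ => 0, by omega, by omega, by omega, by omega⟩
  | succ k ih =>
    obtain ⟨x, hmono, hIoo, hroot, hsgn⟩ := ih
    have hm1 : 0 < (-1:ℝ)^(k+1) * eval (-1) (P (k+1)) := by
      rw [P_eval_negone]
      rw [← mul_assoc, neg_one_sq_pow, one_mul]
      positivity
    have h1 : 0 < eval 1 (P (k+1)) := by
      rw [P_eval_one]; positivity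
    obtain ⟨y, hy⟩ := chain k x (P (k+1)) hmono hIoo hsgn hm1 h1
    -- basic bounds for y
    have hyL : ∀ j, 0 < j → j ≤ k → x (j-1) < y j := by
      intro j hj0 hjk
      have := (hy j hjk).1
      rwa [if_neg (by omega)] at this
    have hyR : ∀ j, j < k → y j < x j := by
      intro j hjk
      have := (hy j (le_of_lt hjk)).2.1
      rwa [if_neg (by omega)] at this
    have hym1 : -1 < y 0 := by
      have := (hy 0 (Nat.zero_le k)).1
      rwa [if_pos rfl] at this
    have hy1 : y k < 1 := by
      have := (hy k (le_refl k)).2.1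
      rwa [if_pos rfl] at this
    have hyIoo : ∀ j, j ≤ k → -1 < y j ∧ y j < 1 := by
      intro j hjk
      constructor
      · rcases Nat.eq_zero_or_pos j with h0 | h0
        · exact h0 ▸ hym1
        · exact lt_trans (hIoo (j-1) (by omega)).1 (hyL j h0 hjk)
      · rcases eq_or_ne j k with hk | hk
        · exact hk ▸ hy1
        · exact lt_trans (hyR j (by omega)) (hIoo j (by omega)).2
    have hymono : ∀ i j, i < j → j < k + 1 → y i < y j := by
      intro i j hij hjk
      have h1 : y i < x i := hyR i (by omega)
      have h2 : x (j-1) < y j := hyL j (by omega) (by omega)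
      rcases eq_or_ne i (j-1) with he | he
      · exact lt_trans (he ▸ h1) h2
      · exact lt_trans h1 (lt_trans (hmono i (j-1) (by omega) (by omega)) h2)
    refine ⟨y, hymono, fun i hi => hyIoo i (by omega), fun i hi => (hy i (by omega)).2.2, ?_⟩
    -- sign of P (k+2) at y j
    intro j hj
    have hjk : j ≤ k := by omega
    have hb : (0:ℝ) < ((k:ℝ)+3) / ((k:ℝ)+2) := by positivity
    have hPk : 0 < (-1:ℝ)^(k-j) * eval (y j) (P k) := by
      rw [P_eq_prod k x hmono hroot (y j)]
      have hlc := (P_deg_lead k).2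
      have hps := prod_sign k j x (y j) hjk
        (fun i hij => by
          rcases eq_or_ne i (j-1) with he | he
          · exact he ▸ hyL j (by omega) hjk
          · exact lt_trans (hmono i (j-1) (by omega) (by omega)) (hyL j (by omega) hjk))
        (fun i hji hik => by
          rcases eq_or_ne i j with he | he
          · exact he ▸ hyR j (by omega)
          · exact lt_trans (hyR j (by omega)) (hmono j i (by omega) hik))
      calc (0:ℝ) < (P k).leadingCoeff * ((-1:ℝ)^(k-j) * ∏ i ∈ Finset.range k, (y j - x i)) :=
            mul_pos hlc hps
        _ = (-1:ℝ)^(k-j) * ((P k).leadingCoeff * ∏ i ∈ Finset.range k, (y j - x i)) := by ring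
    have hev : eval (y j) (P (k+2)) = -((((k:ℝ)+3) / ((k:ℝ)+2)) * eval (y j) (P k)) := by
      rw [P_rec]
      simp only [eval_sub, eval_mul, eval_C, eval_X, (hy j hjk).2.2]
      ring
    have he : k + 1 - j = (k - j) + 1 := by omega
    rw [he, hev, pow_succ]
    calc (0:ℝ) < (((k:ℝ)+3) / ((k:ℝ)+2)) * ((-1:ℝ)^(k-j) * eval (y j) (P k)) :=
          mul_pos hb hPk
      _ = (-1:ℝ)^(k-j) * -1 * -((((k:ℝ)+3) / ((k:ℝ)+2)) * eval (y j) (P k)) := by ring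

lemma roots_eq (q : Polynomial ℝ) (m : ℕ) (y : ℕ → ℝ) (hq : q ≠ 0) (hd : q.natDegree = m)
    (hmono : ∀ i j, i < j → j < m → y i < y j)
    (hroot : ∀ i, i < m → eval (y i) q = 0) :
    q.roots = (Finset.range m).val.map y := by
  have hinj : ∀ i ∈ Finset.range m, ∀ i' ∈ Finset.range m, y i = y i' → i = i' := by
    intro i hi i' hi' hxx
    by_contra hne
    rcases Nat.lt_or_ge i i' with h | h
    · exact absurd hxx (ne_of_lt (hmono i i' h (Finset.mem_range.1 hi')))
    · exact absurd hxx.symm (ne_of_lt (hmono i' i (by omega) (Finset.mem_range.1 hi)))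
  set M : Multiset ℝ := (Finset.range m).val.map y with hM
  have hnodup : M.Nodup := Multiset.Nodup.map_on hinj (Finset.range m).nodup
  have hle : M ≤ q.roots := by
    rw [Multiset.le_iff_subset hnodup]
    intro a ha
    obtain ⟨i, hi, rfl⟩ := Multiset.mem_map.1 ha
    exact (mem_roots hq).2 (hroot i (by simpa using hi))
  have hcard : Multiset.card M = m := by simp [hM]
  refine (Multiset.eq_of_le_of_card_le hle ?_).symm
  rw [hcard]
  exact le_trans q.card_roots' (le_of_eq hd)

/-- For n ≥ 1 and δ = √((n+2)/n), Rₙ = Cₙ^{(3/2)} + δ·C_{n−1}^{(3/2)} has n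
simple real roots, all in (−1, 1). -/
theorem c0_even_nodes_real_simple (n : ℕ) (hn : 1 ≤ n) :
    ∃ s : Finset ℝ, s.card = n ∧
      (∀ x ∈ s, x ∈ Set.Ioo (-1 : ℝ) 1 ∧
        (gegenbauer (3/2) n +
          Real.sqrt (((n : ℝ) + 2) / n) • gegenbauer (3/2) (n - 1)).rootMultiplicity x
          = 1) ∧
      (∀ x : ℝ, (gegenbauer (3/2) n +
          Real.sqrt (((n : ℝ) + 2) / n) • gegenbauer (3/2) (n - 1)).IsRoot x →
        x ∈ s) := by
  classical
  obtain ⟨k, rfl⟩ : ∃ k, n = k + 1 := ⟨n - 1, by omega⟩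
  have hnn : (k + 1 : ℕ) - 1 = k := by omega
  have hcast : (((k+1:ℕ):ℝ) + 2) / ((k+1:ℕ):ℝ) = ((k:ℝ)+3)/((k:ℝ)+1) := by
    push_cast; ring
  set δ : ℝ := Real.sqrt (((k:ℝ)+3)/((k:ℝ)+1)) with hδ
  set R : Polynomial ℝ := P (k+1) + δ • P k with hR
  have hgoal : gegenbauer (3/2) (k+1) +
      Real.sqrt ((((k+1:ℕ):ℝ) + 2) / ((k+1:ℕ):ℝ)) • gegenbauer (3/2) ((k+1) - 1) = R := by
    rw [hnn, hcast]; rfl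
  rw [hgoal]
  -- δ bounds
  have hδpos : 0 < δ := Real.sqrt_pos.2 (by positivity)
  have hδk : δ * ((k:ℝ)+1) < (k:ℝ)+3 := by
    have h1 : (1:ℝ) < ((k:ℝ)+3)/((k:ℝ)+1) := by
      rw [lt_div_iff₀ (by positivity)]; linarith
    have hx : (0:ℝ) < ((k:ℝ)+3)/((k:ℝ)+1) := by positivity
    have h2 : δ < ((k:ℝ)+3)/((k:ℝ)+1) := by
      have h3 := Real.sqrt_lt_sqrt (le_of_lt hx)
        (show ((k:ℝ)+3)/((k:ℝ)+1) < (((k:ℝ)+3)/((k:ℝ)+1))^2 by nlinarith [hx, h1])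
      rwa [Real.sqrt_sq (le_of_lt hx)] at h3
    calc δ * ((k:ℝ)+1) < (((k:ℝ)+3)/((k:ℝ)+1)) * ((k:ℝ)+1) := by
          apply mul_lt_mul_of_pos_right h2 (by positivity)
      _ = (k:ℝ)+3 := by field_simp
  -- evaluations of R
  have hev : ∀ z : ℝ, eval z R = eval z (P (k+1)) + δ * eval z (P k) := by
    intro z; rw [hR]; simp [smul_eq_C_mul]
  have h1 : 0 < eval 1 R := by
    rw [hev, P_eval_one, P_eval_one]
    have : (0:ℝ) ≤ δ := le_of_lt hδpos
    push_cast
    nlinarith [mul_nonneg this (show (0:ℝ) ≤ ((k:ℝ)+1)*((k:ℝ)+2)/2 by positivity),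
      Nat.cast_nonneg (α := ℝ) k]
  have hm1 : 0 < (-1:ℝ)^(k+1) * eval (-1) R := by
    rw [hev, P_eval_negone, P_eval_negone]
    have ht := neg_one_sq_pow k
    have hk0 : (0:ℝ) ≤ (k:ℝ) := Nat.cast_nonneg k
    push_cast
    rw [pow_succ]
    have hkey : ∀ (t A B : ℝ), t*t = 1 → 0 < A - δ*B →
        0 < t * -1 * (t * -1 * A + δ * (t * B)) := by
      intro t A B h hAB
      have heq : t*-1*(t*-1*A + δ*(t*B)) = (t*t)*(A - δ*B) := by ring
      rw [heq, h, one_mul]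
      exact hAB
    apply hkey _ _ _ ht
    nlinarith [mul_pos (show (0:ℝ) < (k:ℝ)+2 by positivity)
      (show (0:ℝ) < (k:ℝ)+3 - δ*((k:ℝ)+1) by linarith)]
  obtain ⟨x, hmono, hIoo, hroot, hsgn⟩ := key k
  have hsgnR : ∀ i, i < k → 0 < (-1:ℝ)^(k-i) * eval (x i) R := by
    intro i hi
    rw [hev, hroot i hi, mul_zero, add_zero]
    exact hsgn i hi
  obtain ⟨y, hy⟩ := chain k x R hmono hIoo hsgnR hm1 h1
  -- properties of y (as in key)
  have hyL : ∀ j, 0 < j → j ≤ k → x (j-1) < y j := by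
    intro j hj0 hjk
    have := (hy j hjk).1
    rwa [if_neg (by omega)] at this
  have hyR : ∀ j, j < k → y j < x j := by
    intro j hjk
    have := (hy j (le_of_lt hjk)).2.1
    rwa [if_neg (by omega)] at this
  have hym1 : -1 < y 0 := by
    have := (hy 0 (Nat.zero_le k)).1
    rwa [if_pos rfl] at this
  have hy1 : y k < 1 := by
    have := (hy k (le_refl k)).2.1
    rwa [if_pos rfl] at this
  have hyIoo : ∀ j, j ≤ k → -1 < y j ∧ y j < 1 := by
    intro j hjk
    constructor
    · rcases Nat.eq_zero_or_pos j with h0 | h0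
      · exact h0 ▸ hym1
      · exact lt_trans (hIoo (j-1) (by omega)).1 (hyL j h0 hjk)
    · rcases eq_or_ne j k with hk | hk
      · exact hk ▸ hy1
      · exact lt_trans (hyR j (by omega)) (hIoo j (by omega)).2
  have hymono : ∀ i j, i < j → j < k + 1 → y i < y j := by
    intro i j hij hjk
    have ha : y i < x i := hyR i (by omega)
    have hb : x (j-1) < y j := hyL j (by omega) (by omega)
    rcases eq_or_ne i (j-1) with he | he
    · exact lt_trans (he ▸ ha) hb
    · exact lt_trans ha (lt_trans (hmono i (j-1) (by omega) (by omega)) hb)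
  -- degree of R
  have hR0 : R ≠ 0 := fun h => by rw [h] at h1; simp at h1
  have hdR : R.natDegree = k + 1 := by
    rw [hR, natDegree_add_eq_left_of_natDegree_lt]
    · exact (P_deg_lead (k+1)).1
    · calc (δ • P k).natDegree ≤ (P k).natDegree := natDegree_smul_le δ (P k)
        _ < (P (k+1)).natDegree := by
            rw [(P_deg_lead k).1, (P_deg_lead (k+1)).1]; omega
  have hroots : R.roots = (Finset.range (k+1)).val.map y :=
    roots_eq R (k+1) y hR0 hdR hymono (fun i hi => (hy i (by omega)).2.2)
  have hnodup : ((Finset.range (k+1)).val.map y).Nodup := by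
    apply Multiset.Nodup.map_on ?_ (Finset.range (k+1)).nodup
    intro i hi i' hi' hxx
    by_contra hne
    rcases Nat.lt_or_ge i i' with h | h
    · exact absurd hxx (ne_of_lt (hymono i i' h (Finset.mem_range.1 hi')))
    · exact absurd hxx.symm (ne_of_lt (hymono i' i (by omega) (Finset.mem_range.1 hi)))
  refine ⟨Finset.image y (Finset.range (k+1)), ?_, ?_, ?_⟩
  · rw [Finset.card_image_of_injOn, Finset.card_range]
    intro i hi i' hi' hxx
    by_contra hne
    rcases Nat.lt_or_ge i i' with h | h
    · exact absurd hxx (ne_of_lt (hymono i i' h (Finset.mem_range.1 (by simpa using hi'))))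
    · exact absurd hxx.symm (ne_of_lt (hymono i' i (by omega) (Finset.mem_range.1 (by simpa using hi))))
  · intro z hz
    obtain ⟨j, hj, rfl⟩ := Finset.mem_image.1 hz
    have hjk : j ≤ k := by have := Finset.mem_range.1 hj; omega
    refine ⟨⟨(hyIoo j hjk).1, (hyIoo j hjk).2⟩, ?_⟩
    rw [← count_roots, hroots]
    exact Multiset.count_eq_one_of_mem hnodup
      (Multiset.mem_map.2 ⟨j, hj, rfl⟩)
  · intro z hz
    have : z ∈ R.roots := (mem_roots hR0).2 hz
    rw [hroots] at this
    obtain ⟨j, hj, rfl⟩ := Multiset.mem_map.1 this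
    exact Finset.mem_image.2 ⟨j, hj, rfl⟩
end

section
/- The three-point periodic rule on [0,2] with nodes 0, 2/3, 4/3 and weights 13/20, 27/40, 27/40 exactly integrates every compactly supported C¹ quartic spline with integer knots when applied periodically; concretely, for the quartic B-spline-type test functions it suffices that: (i) for every quartic p with p(0)=p'(0)=p(1)=p'(1)=0, ∫₀¹ p = (27/40)·p(2/3); and (ii) for every quartic pair (p,q) forming a C¹ function on [0,2] with support [0,2] (p on [0,1], q on [1,2], p(0)=p'(0)=q(2)=q'(2)=0, p(1)=q(1), p'(1)=q'(1)), ∫₀¹ p + ∫₁² q = (13/20)·p(0) + (27/40)·p(2/3) + (27/40)·q(4/3). Claim (i) and (ii) both hold. -/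
/-!
Both claims follow from one Hermite-type quadrature identity, exact on all quartics over any
interval of length one,
  `∫_a^{a+1} p = 13/40 p(a) + 27/40 p(a + 2/3) + 1/30 p'(a) + 1/60 p'(a + 1)`,
and from its mirror image, which has its interior node at `a + 1/3`. The boundary conditions kill
the derivative and endpoint terms; in (ii) the rule is applied to `p` on `[0, 1]` and its mirror
to `q` on `[1, 2]`, so the derivative terms at the knot cancel because `p'(1) = q'(1)`.
-/

open Polynomial Finset

theorem integral_eval_eq_sum_range {p : ℝ[X]} {n : ℕ} (hn : p.natDegree < n) (a b : ℝ) :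
    ∫ x in a..b, p.eval x =
      ∑ i ∈ range n, p.coeff i * ((b ^ (i + 1) - a ^ (i + 1)) / (i + 1)) := by
  simp_rw [eval_eq_sum_range' hn]
  rw [intervalIntegral.integral_finsetSum (f := fun i x => p.coeff i * x ^ i) fun i _ =>
    (continuous_const.mul (continuous_pow i)).intervalIntegrable a b]
  simp_rw [intervalIntegral.integral_const_mul, integral_pow]

theorem eval_derivative_eq_sum_range {R : Type*} [Semiring R] {p : R[X]} {n : ℕ}
    (hn : p.natDegree < n) (x : R) :
    p.derivative.eval x = ∑ i ∈ range n, p.coeff i * i * x ^ (i - 1) := by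
  rw [derivative_eval, p.sum_over_range' (by simp) n hn]

theorem integral_eval_eq_quartic_rule {p : ℝ[X]} (hp : p.natDegree ≤ 4) (a : ℝ) :
    ∫ x in a..a + 1, p.eval x =
      13/40 * p.eval a + 27/40 * p.eval (a + 2/3)
        + 1/30 * p.derivative.eval a + 1/60 * p.derivative.eval (a + 1) := by
  have hn : p.natDegree < 5 := Nat.lt_succ_of_le hp
  rw [integral_eval_eq_sum_range hn]
  simp only [eval_eq_sum_range' hn, eval_derivative_eq_sum_range hn, sum_range_succ,
    sum_range_zero]
  norm_num
  ring

theorem integral_eval_eq_quartic_rule_mirror {p : ℝ[X]} (hp : p.natDegree ≤ 4) (a : ℝ) :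
    ∫ x in a..a + 1, p.eval x =
      13/40 * p.eval (a + 1) + 27/40 * p.eval (a + 1/3)
        - 1/30 * p.derivative.eval (a + 1) - 1/60 * p.derivative.eval a := by
  have hn : p.natDegree < 5 := Nat.lt_succ_of_le hp
  rw [integral_eval_eq_sum_range hn]
  simp only [eval_eq_sum_range' hn, eval_derivative_eq_sum_range hn, sum_range_succ,
    sum_range_zero]
  norm_num
  ring

/-- The C¹ quartic rule C1xD4 = [[0,13/20],[2/3,27/40],[4/3,27/40]]:
(i) exactness on quartics vanishing to order 1 at 0 and 1;
(ii) exactness on C¹ quartic splines supported on [0,2] with knot at 1. -/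
theorem c1_degree4_rule :
    (∀ p : Polynomial ℝ, p.natDegree ≤ 4 →
        p.eval 0 = 0 → p.derivative.eval 0 = 0 →
        p.eval 1 = 0 → p.derivative.eval 1 = 0 →
        ∫ x in (0:ℝ)..1, p.eval x = (27/40) * p.eval (2/3)) ∧
    (∀ p q : Polynomial ℝ, p.natDegree ≤ 4 → q.natDegree ≤ 4 →
        p.eval 0 = 0 → p.derivative.eval 0 = 0 →
        q.eval 2 = 0 → q.derivative.eval 2 = 0 →
        p.eval 1 = q.eval 1 → p.derivative.eval 1 = q.derivative.eval 1 →
        (∫ x in (0:ℝ)..1, p.eval x) + ∫ x in (1:ℝ)..2, q.eval x =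
          (13/20) * p.eval 0 + (27/40) * p.eval (2/3) + (27/40) * q.eval (4/3)) := by
  constructor
  · intro p hp h0 h0' _ h1'
    have hrule := integral_eval_eq_quartic_rule hp 0
    simp only [zero_add] at hrule
    linear_combination hrule + 13/40 * h0 + 1/30 * h0' + 1/60 * h1'
  · intro p q hp hq h0 h0' h2 h2' _ h1'
    have hrule_p := integral_eval_eq_quartic_rule hp 0
    have hrule_q := integral_eval_eq_quartic_rule_mirror hq 1
    simp only [zero_add] at hrule_p
    rw [one_add_one_eq_two, show (1 : ℝ) + 1/3 = 4/3 by norm_num] at hrule_q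
    linear_combination hrule_p + hrule_q - 13/40 * h0 + 1/30 * h0' + 13/40 * h2
      - 1/30 * h2' + 1/60 * h1'
end

section
/- The three-point rule on [0,1] with nodes 0, 1/2 − √7/14, 1/2 + √7/14 and weights 37/135, 49/135, 49/135 satisfies: for every polynomial p of degree at most 7 with p(0) = p(1) = 0 and p'(0) = p'(1) = 0, ∫₀¹ p(x) dx = (49/135)·(p(1/2 − √7/14) + p(1/2 + √7/14)). -/
/-- The C¹ septic rule C1xD7 with nodes 0, 1/2 ± √7/14 and weights 37/135,
49/135, 49/135, on septics vanishing to order 2 at both endpoints. -/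
theorem c1_degree7_rule :
    ∀ p : Polynomial ℝ, p.natDegree ≤ 7 →
      p.eval 0 = 0 → p.eval 1 = 0 →
      p.derivative.eval 0 = 0 → p.derivative.eval 1 = 0 →
      ∫ x in (0:ℝ)..1, p.eval x =
        (49/135) * (p.eval (1/2 - Real.sqrt 7 / 14) + p.eval (1/2 + Real.sqrt 7 / 14)) := by
  intro p hdeg h0 h1 hd0 hd1
  have hu : Real.sqrt 7 ^ 2 = 7 := Real.sq_sqrt (by norm_num)
  have hev : ∀ x : ℝ, p.eval x = ∑ i ∈ Finset.range 8, p.coeff i * x ^ i := by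
    intro x
    rw [Polynomial.eval_eq_sum_range' (lt_of_le_of_lt hdeg (by norm_num : (7:ℕ) < 8))]
  have hdd : p.derivative.natDegree < 7 :=
    lt_of_le_of_lt (Polynomial.natDegree_derivative_le p) (by omega)
  have hder : ∀ x : ℝ, p.derivative.eval x =
      ∑ i ∈ Finset.range 7, p.coeff (i + 1) * (i + 1 : ℝ) * x ^ i := by
    intro x
    rw [Polynomial.eval_eq_sum_range' hdd]
    exact Finset.sum_congr rfl fun i _ => by rw [Polynomial.coeff_derivative]
  rw [hev] at h0 h1
  rw [hder] at hd0 hd1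
  simp only [Finset.sum_range_succ, Finset.sum_range_zero] at h0 h1 hd0 hd1
  have hint : ∫ x in (0:ℝ)..1, p.eval x
      = ∑ i ∈ Finset.range 8, p.coeff i / (i + 1 : ℝ) := by
    rw [intervalIntegral.integral_congr (g := fun x => ∑ i ∈ Finset.range 8, p.coeff i * x ^ i)
        (fun x _ => hev x)]
    rw [intervalIntegral.integral_finset_sum (fun i _ =>
      (Continuous.intervalIntegrable (by continuity) 0 1))]
    refine Finset.sum_congr rfl fun i _ => ?_
    rw [intervalIntegral.integral_const_mul, integral_pow]
    simp
    ring
  rw [hint, hev, hev]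
  simp only [Finset.sum_range_succ, Finset.sum_range_zero] at *
  push_cast at *
  linear_combination (37/270) * h0 + (1/180) * hd0 + (37/270) * h1 - (1/180) * hd1 +
    (p.coeff 2 * (-1/270) + p.coeff 3 * (-1/180)
      + p.coeff 4 * (-43/7560 - Real.sqrt 7 ^ 2 / 52920)
      + p.coeff 5 * (-5/1008 - Real.sqrt 7 ^ 2 / 21168)
      + p.coeff 6 * (-841/211680 - 53 * Real.sqrt 7 ^ 2 / 740880 - Real.sqrt 7 ^ 4 / 10372320)
      + p.coeff 7 * (-61/20160 - Real.sqrt 7 ^ 2 / 11760 - Real.sqrt 7 ^ 4 / 2963520)) * hu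
end

section
/- The symmetric three-point rule on [0,1] with nodes 1/2 − (1/14)√(45 − 2√102), 1/2, 1/2 + (1/14)√(45 − 2√102) and weights 659/2310 + (8/3465)√102, 496/1155 − (16/3465)√102, 659/2310 + (8/3465)√102 integrates exactly every polynomial p of degree at most 7 with p(0) = p(1) = p'(0) = p'(1) = 0. -/
/-!
Vanishing to second order at `0` and `1` means `p = x²(x - 1)² q` with `deg q ≤ 3`; expanding `q`
in powers of `x - 1/2`, both sides become linear in the coefficients, so it suffices to check the
rule on `x²(x - 1)²(x - 1/2)ᵏ` for `k < 4`. The substitution `u = x - 1/2` turns these into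
`(u² - 1/4)² uᵏ`: for odd `k` both sides vanish by symmetry, and for `k = 0, 2` the two sides are
equal elements of `ℚ(√102)` once the squared node offset `(45 - 2√102)/196` is substituted.
-/

open Polynomial

theorem sq_X_sub_C_dvd_of_isRoot_derivative {R : Type*} [CommRing R] {p : R[X]} {t : R}
    (hp : p.IsRoot t) (hp' : (derivative p).IsRoot t) : (X - C t) ^ 2 ∣ p := by
  rcases eq_or_ne p 0 with rfl | hp0
  · exact dvd_zero _
  · exact (le_rootMultiplicity_iff hp0).1 ((one_lt_rootMultiplicity_iff_isRoot hp0).2 ⟨hp, hp'⟩)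

theorem sq_mul_sq_dvd_of_isRoot_derivative {K : Type*} [Field K] {p : K[X]} {a b : K}
    (hab : a ≠ b) (ha : p.IsRoot a) (ha' : (derivative p).IsRoot a) (hb : p.IsRoot b)
    (hb' : (derivative p).IsRoot b) : (X - C a) ^ 2 * (X - C b) ^ 2 ∣ p :=
  (isCoprime_X_sub_C_of_isUnit_sub (sub_ne_zero.2 hab).isUnit).pow.mul_dvd
    (sq_X_sub_C_dvd_of_isRoot_derivative ha ha') (sq_X_sub_C_dvd_of_isRoot_derivative hb hb')

theorem natDegree_lt_of_natDegree_mul_le {R : Type*} [CommRing R] [IsDomain R] {f q : R[X]}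
    {n : ℕ} (hf : f ≠ 0) (hfq : (f * q).natDegree ≤ f.natDegree + n) : q.natDegree < n + 1 := by
  rcases eq_or_ne q 0 with rfl | hq
  · simp
  · rw [natDegree_mul hf hq] at hfq
    omega

theorem eval_eq_sum_range_taylor {R : Type*} [CommRing R] {q : R[X]} {n : ℕ}
    (hq : q.natDegree < n) (r x : R) :
    q.eval x = ∑ k ∈ Finset.range n, (taylor r q).coeff k * (x - r) ^ k := by
  rw [← eval_eq_sum_range' (by rwa [natDegree_taylor]), taylor_eval, sub_add_cancel]

noncomputable def threePointRule (A B h : ℝ) (f : ℝ → ℝ) : ℝ :=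
  A * f (1 / 2 - h) + B * f (1 / 2) + A * f (1 / 2 + h)

theorem integral_finsetSum_eq_threePointRule {A B h : ℝ} {g : ℕ → ℝ → ℝ} (c : ℕ → ℝ)
    (s : Finset ℕ) (hg : ∀ k ∈ s, IntervalIntegrable (g k) MeasureTheory.volume 0 1)
    (hexact : ∀ k ∈ s, ∫ x in (0:ℝ)..1, g k x = threePointRule A B h (g k)) :
    ∫ x in (0:ℝ)..1, ∑ k ∈ s, c k * g k x =
      threePointRule A B h (fun x => ∑ k ∈ s, c k * g k x) := by
  rw [intervalIntegral.integral_finsetSum fun k hk => (hg k hk).const_mul (c k)]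
  simp only [intervalIntegral.integral_const_mul, threePointRule, Finset.mul_sum,
    ← Finset.sum_add_distrib]
  refine Finset.sum_congr rfl fun k hk => ?_
  rw [hexact k hk, threePointRule]
  ring

noncomputable def centeredMoment (n : ℕ) : ℝ := ∫ u in (-1 / 2 : ℝ)..1 / 2, u ^ n

theorem integral_bubble_mul_pow (k : ℕ) :
    ∫ x in (0:ℝ)..1, x ^ 2 * (x - 1) ^ 2 * (x - 1 / 2) ^ k =
      centeredMoment (k + 4) - centeredMoment (k + 2) / 2 + centeredMoment k / 16 := by
  let g : ℝ → ℝ := fun u => u ^ (k + 4) - u ^ (k + 2) / 2 + u ^ k / 16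
  have hg : ∀ x : ℝ, x ^ 2 * (x - 1) ^ 2 * (x - 1 / 2) ^ k = g (x - 1 / 2) := fun x => by ring
  simp_rw [hg]
  rw [intervalIntegral.integral_comp_sub_right g, intervalIntegral.integral_add,
    intervalIntegral.integral_sub, intervalIntegral.integral_div, intervalIntegral.integral_div]
  · norm_num [centeredMoment]
  all_goals apply Continuous.intervalIntegrable; fun_prop

theorem threePointRule_bubble_mul_pow (A B h : ℝ) (k : ℕ) :
    threePointRule A B h (fun x => x ^ 2 * (x - 1) ^ 2 * (x - 1 / 2) ^ k) =
      A * (h ^ 2 - 1 / 4) ^ 2 * ((-h) ^ k + h ^ k) + B * 0 ^ k / 16 := by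
  simp only [threePointRule]
  ring_nf

noncomputable def outerWeight : ℝ := 659 / 2310 + (8 / 3465) * √102

noncomputable def centerWeight : ℝ := 496 / 1155 - (16 / 3465) * √102

noncomputable def nodeOffset : ℝ := (1 / 14) * √(45 - 2 * √102)

theorem nodeOffset_sq : nodeOffset ^ 2 = (45 - 2 * √102) / 196 := by
  have h102 : √102 ≤ 11 := Real.sqrt_le_iff.2 ⟨by norm_num, by norm_num⟩
  rw [nodeOffset, mul_pow, Real.sq_sqrt (by linarith)]
  ring

theorem integral_bubble_mul_pow_eq_threePointRule {k : ℕ} (hk : k < 4) :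
    ∫ x in (0:ℝ)..1, x ^ 2 * (x - 1) ^ 2 * (x - 1 / 2) ^ k =
      threePointRule outerWeight centerWeight nodeOffset
        (fun x => x ^ 2 * (x - 1) ^ 2 * (x - 1 / 2) ^ k) := by
  rw [integral_bubble_mul_pow, threePointRule_bubble_mul_pow]
  have hs : √102 ^ 2 = 102 := Real.sq_sqrt (by norm_num)
  interval_cases k <;> norm_num [centeredMoment, integral_pow]
  -- each certificate is the quotient of the difference of the two sides by `√102 ^ 2 - 102`
  · rw [nodeOffset_sq, outerWeight, centerWeight]
    linear_combination (-2041 / 33277860 - 4 / 8319465 * √102) * hs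
  · rw [nodeOffset_sq, outerWeight]
    linear_combination
      (-72637 / 6522460560 + 1681 / 3261230280 * √102 + 2 / 407653785 * √102 ^ 2) * hs
  · right
    ring

/-- The second C¹ septic rule C1xD7x2: symmetric three-point rule, exact on
septics vanishing to order 2 at 0 and 1. -/
theorem c1_degree7_rule2 :
    ∀ p : Polynomial ℝ, p.natDegree ≤ 7 →
      p.eval 0 = 0 → p.eval 1 = 0 →
      p.derivative.eval 0 = 0 → p.derivative.eval 1 = 0 →
      ∫ x in (0:ℝ)..1, p.eval x =
        (659/2310 + (8/3465) * Real.sqrt 102) *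
            p.eval (1/2 - (1/14) * Real.sqrt (45 - 2 * Real.sqrt 102)) +
          (496/1155 - (16/3465) * Real.sqrt 102) * p.eval (1/2) +
          (659/2310 + (8/3465) * Real.sqrt 102) *
            p.eval (1/2 + (1/14) * Real.sqrt (45 - 2 * Real.sqrt 102)) := by
  intro p hdeg h0 h1 hd0 hd1
  obtain ⟨q, rfl⟩ := sq_mul_sq_dvd_of_isRoot_derivative zero_ne_one h0 hd0 h1 hd1
  have hsq (a : ℝ) : (X - C a) ^ 2 ≠ 0 := pow_ne_zero 2 (X_sub_C_ne_zero a)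
  have hW : ((X - C 0) ^ 2 * (X - C 1) ^ 2 : ℝ[X]).natDegree = 4 := by
    rw [natDegree_mul (hsq 0) (hsq 1)]
    simp only [natDegree_pow, natDegree_X_sub_C]
  have hq : q.natDegree < 4 :=
    natDegree_lt_of_natDegree_mul_le (mul_ne_zero (hsq 0) (hsq 1)) (by rwa [hW])
  have hexpand (x : ℝ) : ((X - C 0) ^ 2 * (X - C 1) ^ 2 * q).eval x =
      ∑ k ∈ Finset.range 4,
        (taylor (1 / 2) q).coeff k * (x ^ 2 * (x - 1) ^ 2 * (x - 1 / 2) ^ k) := by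
    simp only [eval_mul, eval_pow, eval_sub, eval_X, eval_C, eval_eq_sum_range_taylor hq (1 / 2),
      Finset.mul_sum]
    exact Finset.sum_congr rfl fun k _ => by ring
  change _ = threePointRule outerWeight centerWeight nodeOffset
    (fun x => ((X - C 0) ^ 2 * (X - C 1) ^ 2 * q).eval x)
  simp only [hexpand]
  exact integral_finsetSum_eq_threePointRule _ _
    (fun k _ => (by fun_prop : Continuous _).intervalIntegrable _ _)
    (fun k hk => integral_bubble_mul_pow_eq_threePointRule (Finset.mem_range.1 hk))
end

section
/- The four-point rule on [0,1] with nodes 0, 1/2 − √3/6, 1/2, 1/2 + √3/6 and weights 19/105, 9/35, 32/105, 9/35 satisfies: for every polynomial p of degree at most 9 with p(0) = p(1) = p'(0) = p'(1) = 0, ∫₀¹ p(x) dx = (9/35)·p(1/2 − √3/6) + (32/105)·p(1/2) + (9/35)·p(1/2 + √3/6). -/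
/-- The C¹ nonic rule C1xD9 with nodes 0, 1/2 − √3/6, 1/2, 1/2 + √3/6 and weights
19/105, 9/35, 32/105, 9/35, on nonics vanishing to order 2 at both endpoints. -/
theorem c1_degree9_rule :
    ∀ p : Polynomial ℝ, p.natDegree ≤ 9 →
      p.eval 0 = 0 → p.eval 1 = 0 →
      p.derivative.eval 0 = 0 → p.derivative.eval 1 = 0 →
      ∫ x in (0:ℝ)..1, p.eval x =
        (9/35) * p.eval (1/2 - Real.sqrt 3 / 6) + (32/105) * p.eval (1/2) +
          (9/35) * p.eval (1/2 + Real.sqrt 3 / 6) := by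
  intro p hdeg h0 h1 h2 h3
  set r := Real.sqrt 3 with hrdef
  have hr : r ^ 2 = 3 := Real.sq_sqrt (by norm_num)
  have hd : p.natDegree < 10 := lt_of_le_of_lt hdeg (by norm_num)
  have hd' : p.derivative.natDegree < 10 :=
    lt_of_le_of_lt (le_trans p.natDegree_derivative_le (Nat.sub_le _ _) |>.trans hdeg)
      (by norm_num)
  have heval : ∀ x : ℝ, p.eval x = ∑ i ∈ Finset.range 10, p.coeff i * x ^ i :=
    fun x => Polynomial.eval_eq_sum_range' hd x
  have hdeval : ∀ x : ℝ, p.derivative.eval x =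
      ∑ i ∈ Finset.range 10, p.derivative.coeff i * x ^ i :=
    fun x => Polynomial.eval_eq_sum_range' hd' x
  have hint : ∫ x in (0:ℝ)..1, p.eval x
      = ∑ i ∈ Finset.range 10, p.coeff i * (1 / (i + 1 : ℝ)) := by
    simp only [heval]
    rw [intervalIntegral.integral_finset_sum (fun i _ =>
      ((intervalIntegral.intervalIntegrable_pow i).const_mul _))]
    refine Finset.sum_congr rfl fun i _ => ?_
    rw [intervalIntegral.integral_const_mul, integral_pow]
    norm_num
  rw [hint, heval, heval, heval]
  have h10 : p.coeff 10 = 0 := Polynomial.coeff_eq_zero_of_natDegree_lt hd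
  rw [heval 0] at h0
  rw [heval 1] at h1
  rw [hdeval 0] at h2
  rw [hdeval 1] at h3
  simp only [Polynomial.coeff_derivative] at h2 h3
  simp only [Finset.sum_range_succ, Finset.sum_range_zero] at h0 h1 h2 h3 ⊢
  push_cast at h2 h3 ⊢
  linear_combination (1/42) * h10 + (19/210) * h0 + (19/210) * h1 + (1/420) * h2 - (1/420) * h3
    + (p.coeff 2 * (-1/70)
      + p.coeff 3 * (-3/140)
      + p.coeff 4 * (-19/840 - r^2/2520)
      + p.coeff 5 * (-1/48 - r^2/1008)
      + p.coeff 6 * (-181/10080 - 23*r^2/15120 - r^4/90720)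
      + p.coeff 7 * (-43/2880 - r^2/540 - r^4/25920)
      + p.coeff 8 * (-1471/120960 - 143*r^2/72576 - 17*r^4/217728 - r^6/3265920)
      + p.coeff 9 * (-263/26880 - 31*r^2/16128 - 29*r^4/241920 - r^6/725760)) * hr
end

section
/- The five-point two-interval rule with nodes 1/2 − √2/4, 1/2 + √2/4 (weights 2/3 each) on [0,1] and node 3/2 (weight 2/3) on [1,2] satisfies: (i) for every cubic polynomial p with p(0) = p(1) = 0, ∫₀¹ p = (2/3)(p(1/2 − √2/4) + p(1/2 + √2/4)); and (ii) for every cubic q with q(1) = q(2) = 0, ∫₁² q = (2/3)·q(3/2). -/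
open intervalIntegral in
private lemma cubic_integral (c0 c1 c2 c3 a b : ℝ) :
    ∫ x in a..b, (c0 + c1*x + c2*x^2 + c3*x^3) =
      (c0*b + c1*b^2/2 + c2*b^3/3 + c3*b^4/4)
        - (c0*a + c1*a^2/2 + c2*a^3/3 + c3*a^4/4) := by
  have : ∀ x ∈ Set.uIcc a b,
      HasDerivAt (fun x : ℝ => c0*x + c1*x^2/2 + c2*x^3/3 + c3*x^4/4)
        (c0 + c1*x + c2*x^2 + c3*x^3) x := by
    intro x _
    have h : HasDerivAt (fun x : ℝ => c0*x + c1*x^2/2 + c2*x^3/3 + c3*x^4/4)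
        (c0*1 + c1*(2*x)/2 + c2*(3*x^2)/3 + c3*(4*x^3)/4) x := by
      apply HasDerivAt.add
      apply HasDerivAt.add
      apply HasDerivAt.add
      · exact (hasDerivAt_id x).const_mul c0
      · exact (((hasDerivAt_pow 2 x).const_mul c1).div_const 2).congr_deriv (by ring)
      · exact (((hasDerivAt_pow 3 x).const_mul c2).div_const 3).congr_deriv (by ring)
      · exact (((hasDerivAt_pow 4 x).const_mul c3).div_const 4).congr_deriv (by ring)
    exact h.congr_deriv (by ring)
  rw [integral_eq_sub_of_hasDerivAt this ((by fun_prop : Continuous fun x : ℝ => c0 + c1*x + c2*x^2 + c3*x^3).intervalIntegrable a b)]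

private lemma cubic_eval (p : Polynomial ℝ) (h : p.natDegree ≤ 3) (x : ℝ) :
    p.eval x = p.coeff 0 + p.coeff 1 * x + p.coeff 2 * x^2 + p.coeff 3 * x^3 := by
  rw [Polynomial.eval_eq_sum_range' (n := 4) (lt_of_le_of_lt h (by norm_num))]
  simp [Finset.sum_range_succ]

/-- The C⁰ cubic two-interval rule C0xD3: (i) two-point rule on [0,1], exact on
cubics vanishing at 0 and 1; (ii) midpoint node on [1,2], exact on cubics
vanishing at 1 and 2. -/
theorem c0_degree3_rule :
    (∀ p : Polynomial ℝ, p.natDegree ≤ 3 → p.eval 0 = 0 → p.eval 1 = 0 →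
      ∫ x in (0:ℝ)..1, p.eval x =
        (2/3) * (p.eval (1/2 - Real.sqrt 2 / 4) + p.eval (1/2 + Real.sqrt 2 / 4))) ∧
    (∀ q : Polynomial ℝ, q.natDegree ≤ 3 → q.eval 1 = 0 → q.eval 2 = 0 →
      ∫ x in (1:ℝ)..2, q.eval x = (2/3) * q.eval (3/2)) := by
  constructor
  · intro p hd h0 h1
    rw [cubic_eval p hd] at h0 h1
    have key := cubic_integral (p.coeff 0) (p.coeff 1) (p.coeff 2) (p.coeff 3) 0 1
    calc ∫ x in (0:ℝ)..1, p.eval x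
        = ∫ x in (0:ℝ)..1, (p.coeff 0 + p.coeff 1*x + p.coeff 2*x^2 + p.coeff 3*x^3) := by
          apply intervalIntegral.integral_congr
          intro x _; exact cubic_eval p hd x
      _ = (2/3) * (p.eval (1/2 - Real.sqrt 2 / 4) + p.eval (1/2 + Real.sqrt 2 / 4)) := by
          rw [key, cubic_eval p hd, cubic_eval p hd]
          have hs : Real.sqrt 2 ^ 2 = 2 := Real.sq_sqrt (by norm_num)
          have hsum : p.coeff 0 = 0 := by linarith [h0]
          linear_combination (-1/6) * h0 + (-1/6) * h1 - (p.coeff 2/12 + p.coeff 3/8) * hs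
  · intro q hd h1 h2
    rw [cubic_eval q hd] at h1 h2
    have key := cubic_integral (q.coeff 0) (q.coeff 1) (q.coeff 2) (q.coeff 3) 1 2
    calc ∫ x in (1:ℝ)..2, q.eval x
        = ∫ x in (1:ℝ)..2, (q.coeff 0 + q.coeff 1*x + q.coeff 2*x^2 + q.coeff 3*x^3) := by
          apply intervalIntegral.integral_congr
          intro x _; exact cubic_eval q hd x
      _ = (2/3) * q.eval (3/2) := by
          rw [key, cubic_eval q hd]
          linear_combination (1/6) * h1 + (1/6) * h2
end

section
/- For every n ≥ 3, the polynomial Rₙ(x) = n²·Cₙ^{(3/2)}(x) − (n+1)²·C_{n−2}^{(3/2)}(x) and the polynomial C_{n−1}^{(3/2)}(x) have no common root. -/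
open Polynomial

theorem not_isRoot_gegenbauer_zero (α x : ℝ) : ¬(gegenbauer α 0).IsRoot x := by
  simp [gegenbauer]

theorem eval_gegenbauer_add_two (α : ℝ) (k : ℕ) (x : ℝ) :
    (gegenbauer α (k + 2)).eval x =
      2 * ((k : ℝ) + 1 + α) / ((k : ℝ) + 2) * x * (gegenbauer α (k + 1)).eval x -
        ((k : ℝ) + 2 * α) / ((k : ℝ) + 2) * (gegenbauer α k).eval x := by
  simp [gegenbauer]

theorem eval_gegenbauer_add_two_of_isRoot (α : ℝ) (k : ℕ) {x : ℝ}
    (h : (gegenbauer α (k + 1)).IsRoot x) :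
    (gegenbauer α (k + 2)).eval x = -(((k : ℝ) + 2 * α) / ((k : ℝ) + 2)) *
      (gegenbauer α k).eval x := by
  rw [eval_gegenbauer_add_two, h.eq_zero]
  ring

/-- Since `k + 2α ≠ 0`, the recurrence turns a common root of `C_{k+2}` and `C_{k+1}`
into one of `C_{k+1}` and `C_k`; descending reaches `C_0 = 1`. -/
theorem not_isRoot_gegenbauer_succ_and_isRoot {α : ℝ} (hα : 0 < α) (k : ℕ) (x : ℝ) :
    ¬((gegenbauer α (k + 1)).IsRoot x ∧ (gegenbauer α k).IsRoot x) := by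
  induction k with
  | zero => exact fun h => not_isRoot_gegenbauer_zero α x h.2
  | succ k ih =>
    rintro ⟨h₂, h₁⟩
    have hcoeff : ((k : ℝ) + 2 * α) / ((k : ℝ) + 2) ≠ 0 := by positivity
    have h₀ : (gegenbauer α k).eval x = 0 := by
      have := eval_gegenbauer_add_two_of_isRoot α k h₁
      rw [h₂.eq_zero] at this
      simpa [hcoeff] using this.symm
    exact ih ⟨h₁, h₀⟩

theorem c0_odd_nodes_disjoint_general (n : ℕ) :
    ∀ x : ℝ,
      ¬(((n : ℝ) ^ 2 • gegenbauer (3/2) n -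
          ((n : ℝ) + 1) ^ 2 • gegenbauer (3/2) (n - 2)).IsRoot x ∧
        (gegenbauer (3/2) (n - 1)).IsRoot x) := by
  rintro x ⟨hR, hC⟩
  obtain _ | _ | m := n
  · exact not_isRoot_gegenbauer_zero _ x hC
  · exact not_isRoot_gegenbauer_zero _ x hC
  simp only [show m + 2 - 1 = m + 1 by omega] at hR hC
  -- At a root of `C_{m+1}`, `R_{m+2} = -(m+3)(2m+5) C_m`.
  have hRm : (m + 2 : ℝ) * (m + 3) * (2 * m + 5) * (gegenbauer (3/2) m).eval x = 0 := by
    have hrec := eval_gegenbauer_add_two_of_isRoot (3/2) m hC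
    simp only [IsRoot, eval_sub, eval_smul, smul_eq_mul, hrec] at hR
    field_simp at hR
    push_cast at hR
    linear_combination -hR
  have hCm : (gegenbauer (3/2) m).IsRoot x := by
    simpa [IsRoot, show (m + 2 : ℝ) * (m + 3) * (2 * m + 5) ≠ 0 by positivity] using hRm
  exact not_isRoot_gegenbauer_succ_and_isRoot (by norm_num) m x ⟨hC, hCm⟩

/-- For n ≥ 3, Rₙ = n²·Cₙ^{(3/2)} − (n+1)²·C_{n−2}^{(3/2)} and C_{n−1}^{(3/2)}
have no common root. -/
theorem c0_odd_nodes_disjoint (n : ℕ) (hn : 3 ≤ n) :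
    ∀ x : ℝ,
      ¬(((n : ℝ) ^ 2 • gegenbauer (3/2) n -
          ((n : ℝ) + 1) ^ 2 • gegenbauer (3/2) (n - 2)).IsRoot x ∧
        (gegenbauer (3/2) (n - 1)).IsRoot x) :=
  c0_odd_nodes_disjoint_general n
end
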